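/- Consider an instance of single-machine scheduling with one non-renewable resource in which there are exactly q = 2 supply dates, every job has processing time p_j = 1 and resource requirement equal to its weight, a_j = w_j > 0, the jobs are indexed so that w_1 ≥ w_2 ≥ … ≥ w_n, and ∑_{j=1}^n w_j ≤ b_2. For each j let ℓ(j) := min{ℓ ∈ {1,2} : ∑_{j'=1}^{j} w_{j'} ≤ b_ℓ}. Define the list schedule S by S_1 := u_{ℓ(1)} and S_j := max(S_{j−1} + 1, u_{ℓ(j)}) for j = 2, …, n. Then S is a feasible schedule, and for every feasible schedule S* it holds that ∑_{j=1}^n w_j·(S_j + 1) ≤ 2·∑_{j=1}^n w_j·(S*_j + 1); that is, scheduling the jobs in non-increasing weight order is a factor-2 approximation for minimizing ∑_j w_j C_j when there are two supplies. -/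

import Mathlib

open Classical

/-- Cumulative supply over the first `ℓ+1` supplies (0-based indexing of supplies). -/
noncomputable def cumSupply (btilde : ℕ → ℝ) (ℓ : ℕ) : ℝ :=
  ∑ k ∈ Finset.range (ℓ + 1), btilde k

/-- List schedule in job order `0, 1, …` for unit processing times and resource
requirements `a_j = w_j`: job `j` starts at the maximum of the previous job's
completion time and `u (ℓ(j))`, where `ℓ(j)` is the first supply period whose
cumulative supply covers the total weight of the first `j+1` jobs. -/
noncomputable def wListSched (w u btilde : ℕ → ℝ) : ℕ → ℝ
  | 0 => u (sInf {ℓ : ℕ | w 0 ≤ cumSupply btilde ℓ})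
  | (j + 1) => max (wListSched w u btilde j + 1)
      (u (sInf {ℓ : ℕ | ∑ j' ∈ Finset.range (j + 2), w j' ≤ cumSupply btilde ℓ}))

/-- Feasibility of a schedule `S` of `n` unit-time jobs (indexed `0, …, n-1`) with
resource requirements equal to the weights `w`, and `q` supplies at dates
`u 0 < u 1 < …` delivering `btilde` units. -/
def FeasibleW (n q : ℕ) (w u btilde : ℕ → ℝ) (S : ℕ → ℝ) : Prop :=
  (∀ j, j < n → 0 ≤ S j) ∧
  (∀ j, j < n → ∀ j', j' < n → j ≠ j' → S j + 1 ≤ S j' ∨ S j' + 1 ≤ S j) ∧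
  (∀ t : ℝ, 0 ≤ t → ∀ ℓ, ℓ < q → u ℓ ≤ t →
    (∀ ℓ', ℓ' < q → u ℓ' ≤ t → ℓ' ≤ ℓ) →
    ∑ j ∈ (Finset.range n).filter (fun j => S j ≤ t), w j ≤ cumSupply btilde ℓ)

/-!
Call job `j` late if the first `j + 1` weights exceed the first supply `btilde 0`. The list
schedule starts job `j` by `j + u 1 * [j late]`, so its cost is at most
`∑ w_j (j + 1) + u 1 * w(late)`. In a feasible schedule `S`, let `B` be the jobs started at or
after `u 1`. Shifting `B` back by `u 1` leaves two classes of nonnegative, pairwise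
`1`-separated start times, so the first `m` shifted completion times add up to at least
`m (m + 1) / 4`; summation by parts against the non-increasing weights gives
`cost S ≥ ∑ w_j (j + 1) / 2 + u 1 * w(B)`. Finally the jobs started before `u 1` weigh at most
`btilde 0`, so if `k` is the first late job, some job `i ≤ k` lies in `B`; as the late jobs are
`k, …, n - 1`, this gives `w(late) ≤ w(B) + w_k ≤ w(B) + w_i ≤ 2 w(B)`.
-/

open Finset

namespace Finset

variable {ι : Type*} {s : Finset ι} {f : ι → ℝ}

theorem card_le_floor_add_one_of_pairwise_separated {c : ℝ} (h0 : ∀ i ∈ s, 0 ≤ f i)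
    (hc : ∀ i ∈ s, f i ≤ c)
    (hsep : (s : Set ι).Pairwise fun i j => f i + 1 ≤ f j ∨ f j + 1 ≤ f i) :
    #s ≤ ⌊c⌋₊ + 1 := by
  have hfloor_lt : ∀ i ∈ s, ∀ j ∈ s, f i + 1 ≤ f j → ⌊f i⌋₊ < ⌊f j⌋₊ := fun i hi j _ hij => by
    have := Nat.floor_le_floor hij
    rw [Nat.floor_add_one (h0 i hi)] at this
    omega
  have hinj : Set.InjOn (fun i => ⌊f i⌋₊) s := by
    intro i hi j hj hij
    by_contra hne
    rcases hsep hi hj hne with h | h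
    · exact (hfloor_lt i hi j hj h).ne hij
    · exact (hfloor_lt j hj i hi h).ne hij.symm
  calc #s = #(s.image fun i => ⌊f i⌋₊) := (card_image_of_injOn hinj).symm
    _ ≤ #(range (⌊c⌋₊ + 1)) := card_le_card fun k hk => by
        obtain ⟨i, hi, rfl⟩ := mem_image.mp hk
        exact mem_range.mpr (Nat.lt_succ_of_le (Nat.floor_le_floor (hc i hi)))
    _ = ⌊c⌋₊ + 1 := card_range _

theorem card_mul_card_add_one_le_two_mul_sum_of_pairwise_separated (h0 : ∀ i ∈ s, 0 ≤ f i)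
    (hsep : (s : Set ι).Pairwise fun i j => f i + 1 ≤ f j ∨ f j + 1 ≤ f i) :
    (#s : ℝ) * (#s + 1) ≤ 2 * ∑ i ∈ s, (f i + 1) := by
  classical
  induction s using Finset.induction_on_max_value f with
  | empty => simp
  | insert a s ha hmax ih =>
    have hcard : #(insert a s) ≤ ⌊f a⌋₊ + 1 :=
      card_le_floor_add_one_of_pairwise_separated h0 (by simpa using hmax) hsep
    rw [card_insert_of_notMem ha] at hcard ⊢
    have hfa : (#s : ℝ) ≤ f a :=
      calc (#s : ℝ) ≤ ⌊f a⌋₊ := by exact_mod_cast (by omega : #s ≤ ⌊f a⌋₊)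
        _ ≤ f a := Nat.floor_le (h0 a (mem_insert_self a s))
    have ih' := ih (fun i hi => h0 i (mem_insert_of_mem hi))
      (hsep.mono (by simp [Set.subset_insert]))
    rw [sum_insert ha]
    push_cast
    nlinarith

theorem card_mul_card_add_one_le_four_mul_sum_of_separated_on_classes (p : ι → Prop)
    [DecidablePred p] (h0 : ∀ i ∈ s, 0 ≤ f i)
    (hsep : (s : Set ι).Pairwise fun i j => (p i ↔ p j) → f i + 1 ≤ f j ∨ f j + 1 ≤ f i) :
    (#s : ℝ) * (#s + 1) ≤ 4 * ∑ i ∈ s, (f i + 1) := by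
  have hclass : ∀ q : ι → Prop, [DecidablePred q] → (∀ i ∈ s, ∀ j ∈ s, q i → q j → (p i ↔ p j)) →
      (#(s.filter q) : ℝ) * (#(s.filter q) + 1) ≤ 2 * ∑ i ∈ s.filter q, (f i + 1) := by
    intro q _ hq
    refine card_mul_card_add_one_le_two_mul_sum_of_pairwise_separated
      (fun i hi => h0 i (mem_filter.mp hi).1) fun i hi j hj hij => ?_
    obtain ⟨hi, hqi⟩ := mem_filter.mp (mem_coe.mp hi)
    obtain ⟨hj, hqj⟩ := mem_filter.mp (mem_coe.mp hj)
    exact hsep hi hj hij (hq i hi j hj hqi hqj)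
  have hp := hclass p fun i _ j _ hi hj => iff_of_true hi hj
  have hnp := hclass (¬ p ·) fun i _ j _ hi hj => iff_of_false hi hj
  have hcard : (#(s.filter p) : ℝ) + #(s.filter (¬ p ·)) = #s := by
    exact_mod_cast card_filter_add_card_filter_not p
  rw [← sum_filter_add_sum_filter_not s p]
  nlinarith [sq_nonneg ((#(s.filter p) : ℝ) - #(s.filter (¬ p ·)))]

end Finset

section PrefixSums

variable {n : ℕ} {w : ℕ → ℝ}

theorem sum_mul_le_sum_mul_of_sum_range_le {x y : ℕ → ℝ}
    (hw : ∀ i j, i ≤ j → j < n → w j ≤ w i) (hw0 : ∀ j < n, 0 ≤ w j)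
    (hxy : ∀ m ≤ n, ∑ i ∈ range m, x i ≤ ∑ i ∈ range m, y i) :
    ∑ i ∈ range n, w i * x i ≤ ∑ i ∈ range n, w i * y i := by
  rcases Nat.eq_zero_or_pos n with rfl | hn
  · simp
  have hG : ∀ m ≤ n, 0 ≤ ∑ i ∈ range m, (y i - x i) := fun m hm => by
    rw [sum_sub_distrib]; linarith [hxy m hm]
  suffices 0 ≤ ∑ i ∈ range n, w i * (y i - x i) by
    simp only [mul_sub, sum_sub_distrib] at this; linarith
  rw [show ∑ i ∈ range n, w i * (y i - x i) = ∑ i ∈ range n, w i • (y i - x i) from rfl,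
    sum_range_by_parts]
  have hlast : 0 ≤ w (n - 1) • ∑ i ∈ range n, (y i - x i) :=
    mul_nonneg (hw0 _ (by omega)) (hG n le_rfl)
  have hsteps : ∑ i ∈ range (n - 1), (w (i + 1) - w i) • ∑ j ∈ range (i + 1), (y j - x j) ≤ 0 :=
    sum_nonpos fun i hi => by
      have hi := mem_range.mp hi
      exact mul_nonpos_of_nonpos_of_nonneg (sub_nonpos.mpr (hw i (i + 1) (by omega) (by omega)))
        (hG (i + 1) (by omega))
  linarith

theorem sum_filter_sum_range_succ_le {c : ℝ} (hw0 : ∀ j < n, 0 ≤ w j)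
    (hc : 0 ≤ c) :
    ∑ j ∈ (range n).filter (fun j => ∑ i ∈ range (j + 1), w i ≤ c), w j ≤ c := by
  set G := (range n).filter fun j => ∑ i ∈ range (j + 1), w i ≤ c
  rcases G.eq_empty_or_nonempty with hG | hG
  · simpa [hG] using hc
  obtain ⟨hmn, hmc⟩ := mem_filter.mp (G.max'_mem hG)
  refine le_trans (sum_le_sum_of_subset_of_nonneg (fun j hj => ?_) fun j hj _ => ?_) hmc
  · exact mem_range.mpr (Nat.lt_succ_of_le (G.le_max' j hj))
  · exact hw0 j ((mem_range.mp hj).trans_le (mem_range.mp hmn))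

theorem sum_filter_lt_sum_range_succ_le_two_mul {c : ℝ}
    (hw : ∀ i j, i ≤ j → j < n → w j ≤ w i) (hw0 : ∀ j < n, 0 ≤ w j) (p : ℕ → Prop)
    [DecidablePred p] (hp : ∑ j ∈ (range n).filter p, w j ≤ c) :
    ∑ j ∈ (range n).filter (fun j => c < ∑ i ∈ range (j + 1), w i), w j ≤
      2 * ∑ j ∈ (range n).filter (¬ p ·), w j := by
  set F := (range n).filter fun j => c < ∑ i ∈ range (j + 1), w i
  have hnp : 0 ≤ ∑ j ∈ (range n).filter (¬ p ·), w j :=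
    sum_nonneg fun j hj => hw0 j (mem_range.mp (mem_filter.mp hj).1)
  rcases F.eq_empty_or_nonempty with hF | hF
  · simpa [hF] using hnp
  set k := F.min' hF
  obtain ⟨hkn, hkc⟩ := mem_filter.mp (F.min'_mem hF)
  have hkn := mem_range.mp hkn
  have hFk : ∑ j ∈ F, w j ≤ ∑ j ∈ Ico k n, w j :=
    sum_le_sum_of_subset_of_nonneg
      (fun j hj => mem_Ico.mpr ⟨F.min'_le j hj, mem_range.mp (mem_filter.mp hj).1⟩)
      fun j hj _ => hw0 j (mem_Ico.mp hj).2
  obtain ⟨i, hik, hi⟩ : ∃ i ≤ k, ¬ p i := by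
    by_contra! hall
    have : ∑ j ∈ range (k + 1), w j ≤ ∑ j ∈ (range n).filter p, w j :=
      sum_le_sum_of_subset_of_nonneg
        (fun j hj => mem_filter.mpr ⟨mem_range.mpr (by have := mem_range.mp hj; omega),
          hall j (Nat.lt_succ_iff.mp (mem_range.mp hj))⟩)
        fun j hj _ => hw0 j (mem_range.mp (mem_filter.mp hj).1)
    linarith
  have hwk : w k ≤ ∑ j ∈ (range n).filter (¬ p ·), w j :=
    (hw i k hik hkn).trans (single_le_sum (fun j hj => hw0 j (mem_range.mp (mem_filter.mp hj).1))
      (mem_filter.mpr ⟨mem_range.mpr (hik.trans_lt hkn), hi⟩))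
  have htotal := sum_filter_add_sum_filter_not (range n) p w
  rw [sum_Ico_eq_sub w hkn.le] at hFk
  rw [sum_range_succ] at hkc
  linarith

end PrefixSums

theorem cumSupply_zero (btilde : ℕ → ℝ) : cumSupply btilde 0 = btilde 0 := by
  simp [cumSupply]

theorem sInf_setOf_le_cumSupply {btilde : ℕ → ℝ} {x : ℝ} (hx : x ≤ cumSupply btilde 1) :
    sInf {ℓ : ℕ | x ≤ cumSupply btilde ℓ} = if x ≤ btilde 0 then 0 else 1 := by
  split_ifs with h
  · exact Nat.sInf_eq_zero.mpr (Or.inl (by simpa [cumSupply_zero] using h))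
  · refine le_antisymm (Nat.sInf_le hx) (Nat.one_le_iff_ne_zero.mpr fun h0 => h ?_)
    have := Nat.sInf_mem (⟨1, hx⟩ : {ℓ : ℕ | x ≤ cumSupply btilde ℓ}.Nonempty)
    rw [h0] at this
    simpa [cumSupply_zero] using this

/-- The date `u ℓ(j)` of `wListSched` when there are two supplies. -/
noncomputable def releaseDate (w u btilde : ℕ → ℝ) (j : ℕ) : ℝ :=
  if ∑ i ∈ range (j + 1), w i ≤ btilde 0 then u 0 else u 1

section ListSchedule

variable {n : ℕ} {w u btilde : ℕ → ℝ}

theorem u_sInf_eq_releaseDate (hw0 : ∀ j < n, 0 ≤ w j)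
    (htot : ∑ j ∈ range n, w j ≤ cumSupply btilde 1) {j : ℕ} (hj : j < n) :
    u (sInf {ℓ : ℕ | ∑ i ∈ range (j + 1), w i ≤ cumSupply btilde ℓ}) =
      releaseDate w u btilde j := by
  have hprefix : ∑ i ∈ range (j + 1), w i ≤ ∑ i ∈ range n, w i :=
    sum_le_sum_of_subset_of_nonneg (range_subset_range.mpr hj)
      fun i hi _ => hw0 i (mem_range.mp hi)
  rw [sInf_setOf_le_cumSupply (hprefix.trans htot), releaseDate]
  split_ifs <;> rfl

theorem wListSched_zero_eq (hw0 : ∀ j < n, 0 ≤ w j)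
    (htot : ∑ j ∈ range n, w j ≤ cumSupply btilde 1) (hn : 0 < n) :
    wListSched w u btilde 0 = releaseDate w u btilde 0 := by
  rw [← u_sInf_eq_releaseDate hw0 htot hn, sum_range_one]
  rfl

theorem wListSched_succ_eq (hw0 : ∀ j < n, 0 ≤ w j)
    (htot : ∑ j ∈ range n, w j ≤ cumSupply btilde 1) {j : ℕ} (hj : j + 1 < n) :
    wListSched w u btilde (j + 1) =
      max (wListSched w u btilde j + 1) (releaseDate w u btilde (j + 1)) := by
  rw [← u_sInf_eq_releaseDate hw0 htot hj]
  rfl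

theorem wListSched_add_one_le_succ (j : ℕ) :
    wListSched w u btilde j + 1 ≤ wListSched w u btilde (j + 1) :=
  le_max_left _ _

theorem wListSched_add_one_le_of_lt {i j : ℕ} (hij : i < j) :
    wListSched w u btilde i + 1 ≤ wListSched w u btilde j := by
  induction j, hij using Nat.le_induction with
  | base => exact wListSched_add_one_le_succ i
  | succ j _ ih => linarith [wListSched_add_one_le_succ (w := w) (u := u) (btilde := btilde) j]

theorem releaseDate_le_wListSched (hw0 : ∀ j < n, 0 ≤ w j)
    (htot : ∑ j ∈ range n, w j ≤ cumSupply btilde 1) {j : ℕ} (hj : j < n) :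
    releaseDate w u btilde j ≤ wListSched w u btilde j := by
  cases j with
  | zero => exact (wListSched_zero_eq hw0 htot hj).ge
  | succ j => exact (wListSched_succ_eq hw0 htot hj).ge.trans' (le_max_right _ _)

theorem releaseDate_mono (hw0 : ∀ j < n, 0 ≤ w j) (hu : u 0 ≤ u 1) {i j : ℕ} (hij : i ≤ j)
    (hj : j < n) : releaseDate w u btilde i ≤ releaseDate w u btilde j := by
  have hprefix : ∑ k ∈ range (i + 1), w k ≤ ∑ k ∈ range (j + 1), w k :=
    sum_le_sum_of_subset_of_nonneg (range_subset_range.mpr (by omega))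
      fun k hk _ => hw0 k (by have := mem_range.mp hk; omega)
  unfold releaseDate
  split_ifs <;> first | exact le_rfl | exact hu | linarith

theorem wListSched_le (hw0 : ∀ j < n, 0 ≤ w j)
    (htot : ∑ j ∈ range n, w j ≤ cumSupply btilde 1) (hu : u 0 ≤ u 1) {j : ℕ} (hj : j < n) :
    wListSched w u btilde j ≤ j + releaseDate w u btilde j := by
  induction j with
  | zero => simp [wListSched_zero_eq hw0 htot hj]
  | succ j ih =>
    rw [wListSched_succ_eq hw0 htot hj]
    have := releaseDate_mono (btilde := btilde) hw0 hu j.le_succ hj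
    push_cast
    exact max_le (by linarith [ih (by omega)]) (by linarith)

theorem feasibleW_wListSched (hw0 : ∀ j < n, 0 ≤ w j)
    (htot : ∑ j ∈ range n, w j ≤ cumSupply btilde 1) (hu0 : u 0 = 0) (hu1 : 0 ≤ u 1)
    (hb0 : 0 ≤ btilde 0) : FeasibleW n 2 w u btilde (wListSched w u btilde) := by
  have hrelease : ∀ j < n, 0 ≤ releaseDate w u btilde j := fun j _ => by
    unfold releaseDate; split_ifs <;> linarith
  refine ⟨fun j hj => (hrelease j hj).trans (releaseDate_le_wListSched hw0 htot hj),
    fun i _ j _ hij => ?_, fun t _ ℓ hℓ _ hmax => ?_⟩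
  · rcases Nat.lt_or_gt_of_ne hij with h | h
    · exact Or.inl (wListSched_add_one_le_of_lt h)
    · exact Or.inr (wListSched_add_one_le_of_lt h)
  interval_cases ℓ
  · have ht : t < u 1 := lt_of_not_ge fun h => absurd (hmax 1 one_lt_two h) (by norm_num)
    rw [cumSupply_zero]
    refine le_trans (sum_le_sum_of_subset_of_nonneg (fun j hj => ?_)
      fun j hj _ => hw0 j (mem_range.mp (mem_filter.mp hj).1))
      (sum_filter_sum_range_succ_le hw0 hb0)
    obtain ⟨hjn, hjt⟩ := mem_filter.mp hj
    refine mem_filter.mpr ⟨hjn, by_contra fun hlate => ?_⟩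
    have := releaseDate_le_wListSched (u := u) hw0 htot (mem_range.mp hjn)
    rw [releaseDate, if_neg hlate] at this
    linarith
  · exact le_trans (sum_le_sum_of_subset_of_nonneg (filter_subset _ _)
      fun j hj _ => hw0 j (mem_range.mp hj)) htot

theorem sum_mul_wListSched_add_one_le (hw0 : ∀ j < n, 0 ≤ w j)
    (htot : ∑ j ∈ range n, w j ≤ cumSupply btilde 1) (hu0 : u 0 = 0) (hu1 : 0 ≤ u 1) :
    ∑ j ∈ range n, w j * (wListSched w u btilde j + 1) ≤
      ∑ j ∈ range n, w j * ((j : ℝ) + 1) +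
        u 1 * ∑ j ∈ (range n).filter (fun j => btilde 0 < ∑ i ∈ range (j + 1), w i), w j := by
  have hrelease : ∑ j ∈ range n, w j * releaseDate w u btilde j =
      u 1 * ∑ j ∈ (range n).filter (fun j => btilde 0 < ∑ i ∈ range (j + 1), w i), w j := by
    rw [mul_sum, sum_filter]
    refine sum_congr rfl fun j _ => ?_
    by_cases hearly : ∑ i ∈ range (j + 1), w i ≤ btilde 0
    · simp [releaseDate, hearly, not_lt.mpr hearly, hu0]
    · simp [releaseDate, hearly, lt_of_not_ge hearly, mul_comm]
  rw [← hrelease, ← sum_add_distrib]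
  refine sum_le_sum fun j hj => ?_
  have := wListSched_le (u := u) hw0 htot (hu0 ▸ hu1) (mem_range.mp hj)
  nlinarith [hw0 j (mem_range.mp hj)]

end ListSchedule

noncomputable def shiftedStart (t : ℝ) (S : ℕ → ℝ) (j : ℕ) : ℝ :=
  if S j < t then S j else S j - t

theorem sum_mul_add_one_eq_shiftedStart {n : ℕ} {w : ℕ → ℝ} (S : ℕ → ℝ) (t : ℝ) :
    ∑ j ∈ range n, w j * (S j + 1) =
      ∑ j ∈ range n, w j * (shiftedStart t S j + 1) +
        t * ∑ j ∈ (range n).filter (¬ S · < t), w j := by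
  rw [mul_sum, sum_filter, ← sum_add_distrib]
  refine sum_congr rfl fun j _ => ?_
  unfold shiftedStart
  split_ifs <;> ring

section OptimalSchedule

variable {n q : ℕ} {w u btilde S : ℕ → ℝ}

theorem sum_filter_lt_le_of_feasibleW (hS : FeasibleW n 2 w u btilde S) (hw0 : ∀ j < n, 0 ≤ w j)
    (hu0 : u 0 = 0) (hb0 : 0 ≤ btilde 0) :
    ∑ j ∈ (range n).filter (S · < u 1), w j ≤ btilde 0 := by
  set A := (range n).filter (S · < u 1)
  rcases A.eq_empty_or_nonempty with hA | hA
  · simpa [hA] using hb0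
  obtain ⟨k, hkA, hk⟩ := A.exists_max_image S hA
  obtain ⟨hkn, hku⟩ := mem_filter.mp hkA
  have hSk := hS.1 k (mem_range.mp hkn)
  have hres := hS.2.2 (S k) hSk 0 two_pos (hu0 ▸ hSk) fun ℓ hℓ huℓ => by
    interval_cases ℓ
    · rfl
    · linarith
  rw [cumSupply_zero] at hres
  refine le_trans (sum_le_sum_of_subset_of_nonneg (fun j hj => ?_)
    fun j hj _ => hw0 j (mem_range.mp (mem_filter.mp hj).1)) hres
  exact mem_filter.mpr ⟨(mem_filter.mp hj).1, hk j hj⟩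

theorem mul_add_one_le_four_mul_sum_shiftedStart (hS : FeasibleW n q w u btilde S) (t : ℝ)
    {m : ℕ} (hm : m ≤ n) :
    (m : ℝ) * (m + 1) ≤ 4 * ∑ j ∈ range m, (shiftedStart t S j + 1) := by
  have hmn : ∀ j ∈ range m, j < n := fun j hj => (mem_range.mp hj).trans_le hm
  have hclasses := card_mul_card_add_one_le_four_mul_sum_of_separated_on_classes (s := range m)
    (f := shiftedStart t S) (S · < t) (fun j hj => ?nonneg) fun i hi j hj hij hcls => ?sep
  · simpa using hclasses
  case nonneg =>
    have := hS.1 j (hmn j hj)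
    unfold shiftedStart
    split_ifs with hlt
    · exact this
    · linarith [not_lt.mp hlt]
  case sep =>
    have := hS.2.1 i (hmn i hi) j (hmn j hj) hij
    by_cases hit : S i < t
    · simpa only [shiftedStart, if_pos hit, if_pos (hcls.mp hit)]
    · simp only [shiftedStart, if_neg hit, if_neg (hcls.not.mp hit)]
      rcases this with hle | hle
      · exact Or.inl (by linarith)
      · exact Or.inr (by linarith)

theorem sum_mul_add_two_mul_le_of_feasibleW (hS : FeasibleW n q w u btilde S)
    (hw : ∀ i j, i ≤ j → j < n → w j ≤ w i) (hw0 : ∀ j < n, 0 ≤ w j) :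
    ∑ j ∈ range n, w j * ((j : ℝ) + 1) + 2 * (u 1 * ∑ j ∈ (range n).filter (¬ S · < u 1), w j) ≤
      2 * ∑ j ∈ range n, w j * (S j + 1) := by
  have hgauss : ∀ m : ℕ, ∑ j ∈ range m, ((j : ℝ) + 1) = m * (m + 1) / 2 := fun m => by
    induction m with
    | zero => simp
    | succ m ih => rw [sum_range_succ, ih]; push_cast; ring
  have habel := sum_mul_le_sum_mul_of_sum_range_le
    (y := fun j => 2 * (shiftedStart (u 1) S j + 1)) hw hw0 fun m hm => by
      rw [hgauss, ← mul_sum]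
      linarith [mul_add_one_le_four_mul_sum_shiftedStart hS (u 1) hm]
  simp only [mul_left_comm _ (2 : ℝ), ← mul_sum] at habel
  rw [sum_mul_add_one_eq_shiftedStart S (u 1)]
  linarith

end OptimalSchedule

theorem weight_order_two_approx_two_supplies_general (n : ℕ)
    (w : ℕ → ℝ) (hw : ∀ j, j < n → 0 < w j)
    (hsorted : ∀ i j, i ≤ j → j < n → w j ≤ w i)
    (u btilde : ℕ → ℝ)
    (hu0 : u 0 = 0)
    (humono : u 0 < u 1)
    (hbt0 : 0 < btilde 0)
    (htot : ∑ j ∈ Finset.range n, w j ≤ cumSupply btilde 1) :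
    FeasibleW n 2 w u btilde (wListSched w u btilde) ∧
    ∀ Sstar : ℕ → ℝ, FeasibleW n 2 w u btilde Sstar →
      ∑ j ∈ Finset.range n, w j * (wListSched w u btilde j + 1) ≤
        2 * ∑ j ∈ Finset.range n, w j * (Sstar j + 1) := by
  have hw0 : ∀ j < n, 0 ≤ w j := fun j hj => (hw j hj).le
  have hu1 : 0 ≤ u 1 := hu0 ▸ humono.le
  refine ⟨feasibleW_wListSched hw0 htot hu0 hu1 hbt0.le, fun Sstar hS => ?_⟩
  have hlist := sum_mul_wListSched_add_one_le hw0 htot hu0 hu1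
  have hopt := sum_mul_add_two_mul_le_of_feasibleW hS hsorted hw0
  have hlate := sum_filter_lt_sum_range_succ_le_two_mul hsorted hw0 _
    (sum_filter_lt_le_of_feasibleW hS hw0 hu0 hbt0.le)
  nlinarith [mul_le_mul_of_nonneg_left hlate hu1]

/-- For `q = 2` supplies, unit processing times, `a_j = w_j > 0`,
jobs indexed in non-increasing weight order, and total weight at most the total
supply `b_2`, the list schedule in non-increasing weight order is feasible, and
its total weighted completion time is at most twice that of any feasible schedule. -/
theorem weight_order_two_approx_two_supplies (n : ℕ) (hn : 1 ≤ n)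
    (w : ℕ → ℝ) (hw : ∀ j, j < n → 0 < w j)
    (hsorted : ∀ i j, i ≤ j → j < n → w j ≤ w i)
    (u btilde : ℕ → ℝ)
    (hu0 : u 0 = 0)
    (humono : u 0 < u 1)
    (hbt0 : 0 < btilde 0) (hbt1 : 0 < btilde 1)
    (htot : ∑ j ∈ Finset.range n, w j ≤ cumSupply btilde 1) :
    FeasibleW n 2 w u btilde (wListSched w u btilde) ∧
    ∀ Sstar : ℕ → ℝ, FeasibleW n 2 w u btilde Sstar →
      ∑ j ∈ Finset.range n, w j * (wListSched w u btilde j + 1) ≤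
        2 * ∑ j ∈ Finset.range n, w j * (Sstar j + 1) :=
  weight_order_two_approx_two_supplies_general n w hw hsorted u btilde hu0 humono hbt0 htot
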